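/- arXiv:1702.06360 — 4 statements merged into one kernel-verified Lean document; each statement's English description precedes it below -/
import Mathlib

section
/- Let D₁ and D₂ be n×n real diagonal matrices with diagonal entries p₁, …, p_n and q₁, …, q_n respectively, let A and B be n×n symmetric binary matrices with zero diagonal, and let s ∈ {1, −1}. Then (D₁ + sA)(D₂ + sB) = (D₂ + sB)(D₁ + sA) if and only if for all indices i, j with 1 ≤ i, j ≤ n: ( #{k : A i k = 1 ∧ B j k = 1} − #{k : A j k = 1 ∧ B i k = 1} ) + s · ( B i j · (p_i − p_j) + A i j · (q_j − q_i) ) = 0. -/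
/-!
Expanding the commutator of `D₁ + sA` and `D₂ + sB`, the diagonal parts commute, the mixed terms
contribute `s (B i j (p i - p j) + A i j (q j - q i))` entrywise, and the quadratic term is
`s² (AB - BA) = AB - BA`. For symmetric 0/1 matrices, `(AB) i j` counts the `k` with
`A i k = 1` and `B j k = 1`, and `BA = (AB)ᵀ`.
-/

open Matrix Finset

section

variable {ι l m n R : Type*}

theorem sum_mul_eq_card_filter_of_binary [Fintype ι] [NonAssocSemiring R] [DecidableEq R]
    {f g : ι → R} (hf : ∀ k, f k = 0 ∨ f k = 1) (hg : ∀ k, g k = 0 ∨ g k = 1) :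
    ∑ k, f k * g k = #{k | f k = 1 ∧ g k = 1} := by
  rw [natCast_card_filter]
  refine sum_congr rfl fun k _ => ?_
  split_ifs with h
  · rw [h.1, h.2, one_mul]
  · rcases hf k with hf0 | hf1
    · rw [hf0, zero_mul]
    · rcases hg k with hg0 | hg1
      · rw [hg0, mul_zero]
      · exact absurd ⟨hf1, hg1⟩ h

theorem Matrix.mul_transpose_apply_eq_card_of_binary [Fintype m] [NonAssocSemiring R]
    [DecidableEq R] {A : Matrix l m R} {B : Matrix n m R}
    (hA : ∀ i k, A i k = 0 ∨ A i k = 1) (hB : ∀ j k, B j k = 0 ∨ B j k = 1) (i : l) (j : n) :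
    (A * Bᵀ) i j = #{k | A i k = 1 ∧ B j k = 1} :=
  sum_mul_eq_card_filter_of_binary (hA i) (hB j)

theorem Matrix.diagonal_add_smul_commutator_apply [Fintype ι] [DecidableEq ι] [CommRing R]
    (p q : ι → R) (A B : Matrix ι ι R) (s : R) (i j : ι) :
    ((diagonal p + s • A) * (diagonal q + s • B) - (diagonal q + s • B) * (diagonal p + s • A)) i j =
      s ^ 2 * ((A * B) i j - (B * A) i j) + s * (B i j * (p i - p j) + A i j * (q j - q i)) := by
  simp only [add_mul, mul_add, Matrix.smul_mul, Matrix.mul_smul, smul_smul, sub_apply, add_apply, smul_apply,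
    diagonal_mul, mul_diagonal, diagonal_mul_diagonal, smul_eq_mul, diagonal_apply]
  split_ifs <;> ring

end

theorem two_laplacian_blocks_commute_iff_general {n : ℕ}
    (p q : Fin n → ℝ)
    (A B : Matrix (Fin n) (Fin n) ℝ)
    (hA : ∀ i j, A i j = 0 ∨ A i j = 1)
    (hAsymm : Aᵀ = A)
    (hB : ∀ i j, B i j = 0 ∨ B i j = 1)
    (hBsymm : Bᵀ = B)
    (s : ℝ) (hs : s = 1 ∨ s = -1) :
    (Matrix.diagonal p + s • A) * (Matrix.diagonal q + s • B) =
      (Matrix.diagonal q + s • B) * (Matrix.diagonal p + s • A) ↔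
      ∀ i j : Fin n,
        (((Finset.univ.filter fun k => A i k = 1 ∧ B j k = 1).card : ℝ) -
          ((Finset.univ.filter fun k => A j k = 1 ∧ B i k = 1).card : ℝ)) +
          s * (B i j * (p i - p j) + A i j * (q j - q i)) = 0 := by
  have hs2 : s ^ 2 = 1 := by rcases hs with rfl | rfl <;> norm_num
  have hAB : A * B = A * Bᵀ := by rw [hBsymm]
  have hBA : B * A = (A * Bᵀ)ᵀ := by rw [transpose_mul, transpose_transpose, hAsymm]
  rw [← sub_eq_zero, ← Matrix.ext_iff]
  refine forall₂_congr fun i j => ?_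
  rw [Matrix.zero_apply, diagonal_add_smul_commutator_apply, hs2, one_mul, hBA, hAB, transpose_apply,
    mul_transpose_apply_eq_card_of_binary hA hB, mul_transpose_apply_eq_card_of_binary hA hB]

/-- Let `D₁ = diagonal p`, `D₂ = diagonal q` be real diagonal matrices,
`A`, `B` symmetric binary matrices with zero diagonal, and `s ∈ {1, −1}`. Then
`(D₁ + s • A) * (D₂ + s • B) = (D₂ + s • B) * (D₁ + s • A)` iff for all `i, j`:
`(#{k : A i k = 1 ∧ B j k = 1} − #{k : A j k = 1 ∧ B i k = 1})
  + s * (B i j * (p i − p j) + A i j * (q j − q i)) = 0`. -/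
theorem two_laplacian_blocks_commute_iff {n : ℕ}
    (p q : Fin n → ℝ)
    (A B : Matrix (Fin n) (Fin n) ℝ)
    (hA : ∀ i j, A i j = 0 ∨ A i j = 1)
    (hAsymm : Aᵀ = A)
    (hAdiag : ∀ i, A i i = 0)
    (hB : ∀ i j, B i j = 0 ∨ B i j = 1)
    (hBsymm : Bᵀ = B)
    (hBdiag : ∀ i, B i i = 0)
    (s : ℝ) (hs : s = 1 ∨ s = -1) :
    (Matrix.diagonal p + s • A) * (Matrix.diagonal q + s • B) =
      (Matrix.diagonal q + s • B) * (Matrix.diagonal p + s • A) ↔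
      ∀ i j : Fin n,
        (((Finset.univ.filter fun k => A i k = 1 ∧ B j k = 1).card : ℝ) -
          ((Finset.univ.filter fun k => A j k = 1 ∧ B i k = 1).card : ℝ)) +
          s * (B i j * (p i - p j) + A i j * (q j - q i)) = 0 :=
  two_laplacian_blocks_commute_iff_general p q A B hA hAsymm hB hBsymm s hs
end

section
/- Let G be the complete graph on the vertex set Fin m × Fin n with N = mn ≥ 2, let A be its adjacency matrix, D its degree matrix, d = N(N−1) its total degree, and for s ∈ {1, −1} let ρ = (1/d)(D + sA) (signless Laplacian density matrix for s = 1, Laplacian density matrix for s = −1). For μ, ν ∈ Fin m let ρ_{μν} be the n×n block of ρ with (i,j)-entry ρ (μ,i) (ν,j). Then every block ρ_{μν} is a normal matrix, and all the blocks pairwise commute: ρ_{μν} ρ_{αβ} = ρ_{αβ} ρ_{μν} for all μ, ν, α, β ∈ Fin m. -/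
/-!
For the complete graph, `D = (N - 1) • 1` and `A = J - 1` with `J = of 1` the all-ones matrix,
so `ρ` is a combination of `1` and `J`. Every `n × n` block of such a matrix is again a
combination of `1` and `J` (the identity only survives in the diagonal blocks), and these
combinations form a commutative family of symmetric matrices.
-/

open Matrix

namespace Matrix

variable {ι κ R : Type*}

theorem commute_smul_one_add_smul_of_one [Fintype ι] [DecidableEq ι] [CommSemiring R]
    (a b c d : R) :
    Commute (a • 1 + b • of 1 : Matrix ι ι R) (c • 1 + d • of 1) :=
  ((Commute.one_left _).smul_left a).add_left
    ((((Commute.one_right _).smul_right c).add_right ((Commute.refl _).smul_right d)).smul_left b)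

theorem transpose_smul_one_add_smul_of_one [DecidableEq ι] [Semiring R] (a b : R) :
    (a • 1 + b • of 1 : Matrix ι ι R)ᵀ = a • 1 + b • of 1 := by
  ext i j
  simp [one_apply, eq_comm]

theorem block_smul_one_add_smul_of_one [DecidableEq ι] [DecidableEq κ] [Semiring R]
    (a b : R) (μ ν : ι) :
    of (fun i j => (a • 1 + b • of 1 : Matrix (ι × κ) (ι × κ) R) (μ, i) (ν, j)) =
      (if μ = ν then a else 0) • (1 : Matrix κ κ R) + b • of 1 := by
  ext i j
  by_cases hμν : μ = ν <;> simp [one_apply, hμν]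

end Matrix

theorem SimpleGraph.diagonal_degree_add_smul_adjMatrix_top {V R : Type*} [Fintype V]
    [DecidableEq V] [DecidableRel (⊤ : SimpleGraph V).Adj] [Ring R] (s : R) :
    diagonal (fun v => ((⊤ : SimpleGraph V).degree v : R)) + s • (⊤ : SimpleGraph V).adjMatrix R =
      (((Fintype.card V - 1 : ℕ) : R) - s) • 1 + s • of 1 := by
  ext v w
  by_cases hvw : v = w
  · subst hvw
    have hdeg : (⊤ : SimpleGraph V).degree v = Fintype.card V - 1 := by
      convert SimpleGraph.complete_graph_degree v
    simp [hdeg]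
  · simp [hvw]

theorem complete_graph_blocks_normal_commute_general {m n : ℕ}
    (G : SimpleGraph (Fin m × Fin n)) [DecidableRel G.Adj] (hG : G = ⊤)
    (s : ℝ)
    (ρ : Matrix (Fin m × Fin n) (Fin m × Fin n) ℝ)
    (hρ : ρ = (((m * n : ℝ)) * ((m * n : ℝ) - 1))⁻¹ •
        (Matrix.diagonal (fun v => (G.degree v : ℝ)) + s • G.adjMatrix ℝ))
    (blk : Fin m → Fin m → Matrix (Fin n) (Fin n) ℝ)
    (hblk : ∀ μ ν, blk μ ν = Matrix.of fun i j => ρ (μ, i) (ν, j)) :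
    (∀ μ ν, blk μ ν * (blk μ ν)ᵀ = (blk μ ν)ᵀ * blk μ ν) ∧
      (∀ μ ν α β, blk μ ν * blk α β = blk α β * blk μ ν) := by
  subst hG
  set c : ℝ := (((m * n : ℝ)) * ((m * n : ℝ) - 1))⁻¹
  set k : ℝ := ((Fintype.card (Fin m × Fin n) - 1 : ℕ) : ℝ)
  have hρ' : ρ = (c * (k - s)) • 1 + (c * s) • of 1 := by
    rw [hρ, SimpleGraph.diagonal_degree_add_smul_adjMatrix_top, smul_add, smul_smul, smul_smul]
  have hblk' : ∀ μ ν, blk μ ν = (if μ = ν then c * (k - s) else 0) • 1 + (c * s) • of 1 := by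
    intro μ ν
    rw [hblk, hρ', block_smul_one_add_smul_of_one]
  refine ⟨fun μ ν => ?_, fun μ ν α β => ?_⟩
  · rw [hblk', transpose_smul_one_add_smul_of_one]
  · rw [hblk', hblk']
    exact (commute_smul_one_add_smul_of_one _ _ _ _).eq

/-- For the complete graph `G` on `Fin m × Fin n` (with `N = m*n ≥ 2`),
the density matrix `ρ = (1/(N(N−1))) • (D + s • A)` (for `s ∈ {1,−1}`, with `A` the
adjacency matrix and `D` the degree matrix) has all of its n×n blocks normal, and
all blocks pairwise commute. -/
theorem complete_graph_blocks_normal_commute {m n : ℕ} (hmn : 2 ≤ m * n)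
    (G : SimpleGraph (Fin m × Fin n)) [DecidableRel G.Adj] (hG : G = ⊤)
    (s : ℝ) (hs : s = 1 ∨ s = -1)
    (ρ : Matrix (Fin m × Fin n) (Fin m × Fin n) ℝ)
    (hρ : ρ = (((m * n : ℝ)) * ((m * n : ℝ) - 1))⁻¹ •
        (Matrix.diagonal (fun v => (G.degree v : ℝ)) + s • G.adjMatrix ℝ))
    (blk : Fin m → Fin m → Matrix (Fin n) (Fin n) ℝ)
    (hblk : ∀ μ ν, blk μ ν = Matrix.of fun i j => ρ (μ, i) (ν, j)) :
    (∀ μ ν, blk μ ν * (blk μ ν)ᵀ = (blk μ ν)ᵀ * blk μ ν) ∧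
      (∀ μ ν α β, blk μ ν * blk α β = blk α β * blk μ ν) :=
  complete_graph_blocks_normal_commute_general G hG s ρ hρ blk hblk
end

section
/- Fix d ≥ 2 and x ∈ [0,1] with x ≠ 1/d. Let F be the d²×d² swap matrix indexed by Fin d × Fin d with entries F (a,b) (c,e) = 1 if a = e and b = c, and 0 otherwise, and let ρ = ((d−x)/(d³−d)) I + ((xd−1)/(d³−d)) F be the Werner state. Then for any μ ≠ ν in Fin d, the (μ,ν)-block B of ρ (the d×d matrix with B i j = ρ (μ,i) (ν,j)) equals ((xd−1)/(d³−d)) times the matrix unit E_{νμ}, and B is not normal: B Bᵀ ≠ Bᵀ B. -/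
open Matrix

/-!
Off the diagonal blocks the identity contributes nothing, while the `(μ, ν)` block of the swap
operator is the matrix unit `E_{νμ}`. A nonzero multiple of `E_{νμ}` with `ν ≠ μ` is not normal:
`E_{νμ} E_{νμ}ᵀ = E_{νν}` but `E_{νμ}ᵀ E_{νμ} = E_{μμ}`. For `d ≥ 2` the Werner coefficient
`(xd − 1)/(d³ − d)` vanishes only at `x = 1/d`.
-/

theorem swap_block_eq_single {ι R : Type*} [DecidableEq ι] [Zero R] [One R]
    (F : Matrix (ι × ι) (ι × ι) R)
    (hF : ∀ a b c e : ι, F (a, b) (c, e) = if a = e ∧ b = c then 1 else 0) (μ ν : ι) :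
    Matrix.of (fun i j => F (μ, i) (ν, j)) = single ν μ 1 := by
  ext i j
  simp only [of_apply, hF, single_apply]
  grind

theorem single_mul_transpose_ne_transpose_mul {m R : Type*} [Fintype m] [DecidableEq m]
    [Semiring R] [NoZeroDivisors R] {i j : m} (hij : i ≠ j) {c : R} (hc : c ≠ 0) :
    single i j c * (single i j c)ᵀ ≠ (single i j c)ᵀ * single i j c := by
  intro h
  have := congrFun (congrFun h i) i
  simp [transpose_single, hij, hc] at this

theorem werner_coeff_ne_zero {d : ℕ} (hd : 2 ≤ d) {x : ℝ} (hxd : x ≠ 1 / d) :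
    (x * d - 1) / ((d : ℝ) ^ 3 - d) ≠ 0 := by
  have hd1 : (1 : ℝ) < d := by exact_mod_cast hd
  have hden : (d : ℝ) ^ 3 - d ≠ 0 := by
    have : (d : ℝ) ^ 3 - d = d * ((d - 1) * (d + 1)) := by ring
    rw [this]
    exact mul_ne_zero (by positivity) (mul_ne_zero (by linarith) (by positivity))
  have hnum : x * d - 1 ≠ 0 := by
    contrapose! hxd
    field_simp
    linarith
  exact div_ne_zero hnum hden

theorem werner_offdiag_block_eq_stdBasis_and_not_normal_general {d : ℕ} (hd : 2 ≤ d)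
    (x : ℝ) (hxd : x ≠ 1 / d)
    (F : Matrix (Fin d × Fin d) (Fin d × Fin d) ℝ)
    (hF : ∀ a b c e : Fin d, F (a, b) (c, e) = if a = e ∧ b = c then 1 else 0)
    (ρ : Matrix (Fin d × Fin d) (Fin d × Fin d) ℝ)
    (hρ : ρ = (((d : ℝ) - x) / ((d : ℝ) ^ 3 - d)) • (1 : Matrix (Fin d × Fin d) (Fin d × Fin d) ℝ)
        + ((x * d - 1) / ((d : ℝ) ^ 3 - d)) • F) :
    ∀ μ ν : Fin d, μ ≠ ν →
      ∀ B : Matrix (Fin d) (Fin d) ℝ, B = Matrix.of (fun i j => ρ (μ, i) (ν, j)) →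
        B = ((x * d - 1) / ((d : ℝ) ^ 3 - d)) • Matrix.single ν μ (1 : ℝ) ∧
          B * Bᵀ ≠ Bᵀ * B := by
  intro μ ν hμν B hB
  set c : ℝ := (x * d - 1) / ((d : ℝ) ^ 3 - d)
  have hblock : B = c • single ν μ 1 := by
    have hFblock := congrFun₂ (swap_block_eq_single F hF μ ν)
    ext i j
    simp only [of_apply] at hFblock
    simp [hB, hρ, one_apply, hμν, hFblock]
  refine ⟨hblock, ?_⟩
  rw [hblock, smul_single, smul_eq_mul, mul_one]
  exact single_mul_transpose_ne_transpose_mul hμν.symm (werner_coeff_ne_zero hd hxd)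

/-- For `d ≥ 2` and `x ∈ [0,1]` with `x ≠ 1/d`, the Werner state
`ρ = ((d−x)/(d³−d)) • I + ((xd−1)/(d³−d)) • F`, where `F` is the swap matrix, has
every off-diagonal (μ,ν)-block `B` equal to `((xd−1)/(d³−d))` times the matrix unit
`E_{νμ}`, and `B` is not normal. -/
theorem werner_offdiag_block_eq_stdBasis_and_not_normal {d : ℕ} (hd : 2 ≤ d)
    (x : ℝ) (hx : x ∈ Set.Icc (0 : ℝ) 1) (hxd : x ≠ 1 / d)
    (F : Matrix (Fin d × Fin d) (Fin d × Fin d) ℝ)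
    (hF : ∀ a b c e : Fin d, F (a, b) (c, e) = if a = e ∧ b = c then 1 else 0)
    (ρ : Matrix (Fin d × Fin d) (Fin d × Fin d) ℝ)
    (hρ : ρ = (((d : ℝ) - x) / ((d : ℝ) ^ 3 - d)) • (1 : Matrix (Fin d × Fin d) (Fin d × Fin d) ℝ)
        + ((x * d - 1) / ((d : ℝ) ^ 3 - d)) • F) :
    ∀ μ ν : Fin d, μ ≠ ν →
      ∀ B : Matrix (Fin d) (Fin d) ℝ, B = Matrix.of (fun i j => ρ (μ, i) (ν, j)) →
        B = ((x * d - 1) / ((d : ℝ) ^ 3 - d)) • Matrix.single ν μ (1 : ℝ) ∧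
          B * Bᵀ ≠ Bᵀ * B :=
  werner_offdiag_block_eq_stdBasis_and_not_normal_general hd x hxd F hF ρ hρ
end

section
/- There exist two isomorphic simple graphs G and H on the vertex set Fin 2 × Fin 3 (i.e. there is a graph isomorphism between G and H) such that, partitioning their Laplacian matrices into four 3×3 blocks according to the first coordinate, every block of L(G) is normal and all blocks of L(G) pairwise commute, while the blocks of L(H) do not all pairwise commute. In particular, normality and pairwise commutativity of the blocks of the Laplacian (equivalently, zero quantum discord of ρ_l) is not invariant under graph isomorphism. -/
open Matrix

/-- The real Laplacian matrix `D − A` of a simple graph on `Fin 2 × Fin 3`. -/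
noncomputable def lapMatrixR (G : SimpleGraph (Fin 2 × Fin 3)) :
    Matrix (Fin 2 × Fin 3) (Fin 2 × Fin 3) ℝ :=
  haveI : DecidableRel G.Adj := Classical.decRel _
  G.lapMatrix ℝ

/-- The (μ,ν)-block of a matrix indexed by `Fin 2 × Fin 3`, obtained by fixing the
first coordinates to `μ` and `ν`. -/
def blockOf (M : Matrix (Fin 2 × Fin 3) (Fin 2 × Fin 3) ℝ) (μ ν : Fin 2) :
    Matrix (Fin 3) (Fin 3) ℝ :=
  Matrix.of fun i j => M (μ, i) (ν, j)

/-!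
With the clusters equal to the two parts of `K₃,₃`, the diagonal blocks of its Laplacian are the
scalar `3` and the off-diagonal blocks are `-J` (all entries `-1`), so any two blocks commute and,
the Laplacian being symmetric, `Bᵀ_{μν} = B_{νμ}` commutes with `B_{μν}`. Swapping the vertices
`(0, 0)` and `(1, 0)` gives an isomorphic graph in which the blocks `B₀₀` and `B₀₁` no longer
commute: their products differ in the entry `(0, 1)`.
-/

theorem SimpleGraph.lapMatrix_apply_of_isRegularOfDegree {V R : Type*} [Fintype V]
    [DecidableEq V] [AddGroupWithOne R] {G : SimpleGraph V} [DecidableRel G.Adj] {d : ℕ}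
    (hG : G.IsRegularOfDegree d) (u v : V) :
    G.lapMatrix R u v = if u = v then (d : R) else if G.Adj u v then -1 else 0 := by
  by_cases huv : u = v
  · subst huv
    simp [lapMatrix, degMatrix, hG.degree_eq]
  · by_cases h : G.Adj u v <;> simp [lapMatrix, degMatrix, huv, h]

theorem lapMatrixR_eq_lapMatrix (G : SimpleGraph (Fin 2 × Fin 3)) [DecidableRel G.Adj] :
    lapMatrixR G = G.lapMatrix ℝ := by
  unfold lapMatrixR
  congr

theorem isSymm_lapMatrixR (G : SimpleGraph (Fin 2 × Fin 3)) : (lapMatrixR G).IsSymm := by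
  classical
  exact lapMatrixR_eq_lapMatrix G ▸ G.isSymm_lapMatrix ℝ

theorem transpose_blockOf {M : Matrix (Fin 2 × Fin 3) (Fin 2 × Fin 3) ℝ} (hM : M.IsSymm)
    (μ ν : Fin 2) : (blockOf M μ ν)ᵀ = blockOf M ν μ := by
  ext i j
  exact hM.apply _ _

def completeBipartiteByFst : SimpleGraph (Fin 2 × Fin 3) :=
  (⊤ : SimpleGraph (Fin 2)).comap Prod.fst

theorem completeBipartiteByFst_adj {u v : Fin 2 × Fin 3} :
    completeBipartiteByFst.Adj u v ↔ u.1 ≠ v.1 :=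
  Iff.rfl

instance : DecidableRel completeBipartiteByFst.Adj :=
  fun _ _ => decidable_of_iff' _ completeBipartiteByFst_adj

def relabelled : SimpleGraph (Fin 2 × Fin 3) :=
  completeBipartiteByFst.comap (Equiv.swap (0, 0) (1, 0))

instance : DecidableRel relabelled.Adj :=
  fun _ _ => inferInstanceAs (Decidable (completeBipartiteByFst.Adj _ _))

theorem isRegularOfDegree_completeBipartiteByFst :
    completeBipartiteByFst.IsRegularOfDegree 3 := by
  intro v
  revert v
  decide

theorem isRegularOfDegree_relabelled : relabelled.IsRegularOfDegree 3 := by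
  intro v
  revert v
  decide

theorem blockOf_lapMatrixR_completeBipartiteByFst (μ ν : Fin 2) :
    blockOf (lapMatrixR completeBipartiteByFst) μ ν =
      if μ = ν then 3 else -of fun _ _ => 1 := by
  ext i j
  rw [lapMatrixR_eq_lapMatrix]
  simp only [blockOf, of_apply, completeBipartiteByFst_adj,
    SimpleGraph.lapMatrix_apply_of_isRegularOfDegree isRegularOfDegree_completeBipartiteByFst]
  split_ifs <;> simp_all [Matrix.ofNat_apply]

theorem commute_blockOf_lapMatrixR_completeBipartiteByFst (μ ν α β : Fin 2) :
    Commute (blockOf (lapMatrixR completeBipartiteByFst) μ ν)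
      (blockOf (lapMatrixR completeBipartiteByFst) α β) := by
  simp only [blockOf_lapMatrixR_completeBipartiteByFst]
  split_ifs
  · exact Commute.refl _
  · exact Commute.ofNat_left _ _
  · exact Commute.ofNat_right _ _
  · exact Commute.refl _

theorem blockOf_lapMatrixR_relabelled_zero_zero :
    blockOf (lapMatrixR relabelled) 0 0 = !![3, -1, -1; -1, 3, 0; -1, 0, 3] := by
  rw [lapMatrixR_eq_lapMatrix]
  ext i j
  fin_cases i <;> fin_cases j <;>
    simp +decide [blockOf,
      SimpleGraph.lapMatrix_apply_of_isRegularOfDegree isRegularOfDegree_relabelled]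

theorem blockOf_lapMatrixR_relabelled_zero_one :
    blockOf (lapMatrixR relabelled) 0 1 = !![-1, 0, 0; 0, -1, -1; 0, -1, -1] := by
  rw [lapMatrixR_eq_lapMatrix]
  ext i j
  fin_cases i <;> fin_cases j <;>
    simp +decide [blockOf,
      SimpleGraph.lapMatrix_apply_of_isRegularOfDegree isRegularOfDegree_relabelled]

theorem not_commute_blockOf_lapMatrixR_relabelled :
    ¬ Commute (blockOf (lapMatrixR relabelled) 0 0) (blockOf (lapMatrixR relabelled) 0 1) := by
  rw [blockOf_lapMatrixR_relabelled_zero_zero, blockOf_lapMatrixR_relabelled_zero_one]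
  intro h
  have h01 := congrFun (congrFun h.eq 0) 1
  simp [Matrix.mul_apply, Fin.sum_univ_three] at h01

/-- There exist isomorphic simple graphs `G` and `H` on `Fin 2 × Fin 3`
such that all 3×3 blocks of the Laplacian of `G` are normal and pairwise commute,
while the blocks of the Laplacian of `H` do not all pairwise commute. Hence zero
quantum discord of `ρ_l` is not invariant under graph isomorphism. -/
theorem exists_isomorphic_graphs_discord_not_invariant :
    ∃ (G H : SimpleGraph (Fin 2 × Fin 3)), Nonempty (G ≃g H) ∧
      (∀ μ ν : Fin 2,
        blockOf (lapMatrixR G) μ ν * (blockOf (lapMatrixR G) μ ν)ᵀ =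
          (blockOf (lapMatrixR G) μ ν)ᵀ * blockOf (lapMatrixR G) μ ν) ∧
      (∀ μ ν α β : Fin 2,
        blockOf (lapMatrixR G) μ ν * blockOf (lapMatrixR G) α β =
          blockOf (lapMatrixR G) α β * blockOf (lapMatrixR G) μ ν) ∧
      ¬ (∀ μ ν α β : Fin 2,
        blockOf (lapMatrixR H) μ ν * blockOf (lapMatrixR H) α β =
          blockOf (lapMatrixR H) α β * blockOf (lapMatrixR H) μ ν) := by
  have hG := commute_blockOf_lapMatrixR_completeBipartiteByFst
  refine ⟨completeBipartiteByFst, relabelled, ⟨(SimpleGraph.Iso.comap _ _).symm⟩,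
    fun μ ν => ?_, fun μ ν α β => (hG μ ν α β).eq,
    fun h => not_commute_blockOf_lapMatrixR_relabelled (h 0 0 0 1)⟩
  rw [transpose_blockOf (isSymm_lapMatrixR _)]
  exact (hG μ ν ν μ).eq
end
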